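/- arXiv:1909.09363 — 3 statements merged into one kernel-verified Lean document; each statement's English description precedes it below -/
import Mathlib

section
/- Let k ≥ 1 be an integer and let λ = (λ_1 ≥ λ_2 ≥ ⋯ ≥ λ_l) be a partition that generates all k-partitions of n = Σ_{j=1}^l λ_j. Then for every m ∈ {2, …, l}, the truncated partition (λ_m, λ_{m+1}, …, λ_l) generates all k-partitions of Σ_{j=m}^l λ_j. -/
/-- A partition of `n`: a multiset of positive integers summing to `n`. -/
def IsPartition (n : ℕ) (lam : Multiset ℕ) : Prop :=
  (∀ x ∈ lam, 0 < x) ∧ lam.sum = n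

/-- `μ` generates `lam`: `μ` decomposes into disjoint sub-multisets, one summing
to each part of `lam`. -/
def Generates (μ lam : Multiset ℕ) : Prop :=
  ∃ P : Multiset (Multiset ℕ), P.sum = μ ∧ P.map Multiset.sum = lam

/-- `μ` generates all partitions of `n` with at most `k` parts. -/
def GeneratesAll (n k : ℕ) (μ : Multiset ℕ) : Prop :=
  ∀ lam : Multiset ℕ, IsPartition n lam → Multiset.card lam ≤ k → Generates μ lam

/-- The greedy partition: repeatedly take `⌈remainder / k⌉`. -/
def greedyList (k : ℕ) : ℕ → List ℕ
  | 0 => []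
  | (n + 1) =>
    if hk : k = 0 then []
    else (n + k) / k :: greedyList k (n + 1 - (n + k) / k)
  termination_by n => n
  decreasing_by
    have h1 : 1 ≤ (n + k) / k :=
      (Nat.one_le_div_iff (Nat.pos_of_ne_zero hk)).mpr (Nat.le_add_left k n)
    omega

lemma my_exists_max (s : Multiset ℕ) (hs : s ≠ 0) : ∃ b ∈ s, ∀ x ∈ s, x ≤ b := by
  induction s using Multiset.induction_on with
  | empty => exact absurd rfl hs
  | cons a s ih =>
    by_cases h : s = 0
    · subst h; exact ⟨a, Multiset.mem_cons_self a 0, by simp⟩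
    · obtain ⟨b, hb, hmax⟩ := ih h
      refine ⟨max a b, Multiset.mem_cons.2 ?_, ?_⟩
      · rcases le_total a b with h'|h'
        · right; rwa [max_eq_right h']
        · left; rw [max_eq_left h']
      · intro x hx
        rcases Multiset.mem_cons.1 hx with h'|h'
        · subst h'; exact le_max_left _ _
        · exact le_trans (hmax x h') (le_max_right a b)

lemma suff (k : ℕ) (hk : 1 ≤ k) (μ : List ℕ) (hpos : ∀ x ∈ μ, 0 < x)
    (hcond : ∀ i, (h : i < μ.length) → k * μ[i] ≤ (μ.drop i).sum + (k - 1)) :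
    GeneratesAll μ.sum k ↑μ := by
  induction μ with
  | nil =>
    intro ν ⟨hνpos, hνsum⟩ _
    have : ν = 0 := by
      rcases Multiset.empty_or_exists_mem ν with h|⟨x, hx⟩
      · exact h
      · exfalso
        have := Multiset.single_le_sum (fun y _ => Nat.zero_le y) x hx
        have := hνpos x hx
        simp at hνsum
        omega
    exact ⟨0, by simp [this]⟩
  | cons a t ih =>
    intro ν ⟨hνpos, hνsum⟩ hνcard
    have ha : 0 < a := hpos a List.mem_cons_self
    have hn : (a :: t).sum = a + t.sum := by simp
    -- ν nonempty
    have hν0 : ν ≠ 0 := by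
      intro h; subst h; simp at hνsum; omega
    obtain ⟨b, hb, hbmax⟩ := my_exists_max ν hν0
    -- k * b ≥ n
    have hsum_le : ν.sum ≤ Multiset.card ν * b := Multiset.sum_le_card_nsmul ν b hbmax
    have hkb : ν.sum ≤ k * b := le_trans hsum_le (Nat.mul_le_mul_right b hνcard)
    have hcond0 := hcond 0 (by simp)
    simp at hcond0
    have hab : a ≤ b := by
      have h1 : k * a ≤ k * b + (k - 1) := by
        rw [hνsum, hn] at hkb; omega
      have h2 : k * a < k * (b + 1) := by
        have e : k * (b + 1) = k * b + k := by ring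
        omega
      exact Nat.lt_succ_iff.mp (Nat.lt_of_mul_lt_mul_left h2)
    have hbn : b ≤ ν.sum := Multiset.single_le_sum (fun y _ => Nat.zero_le y) b hb
    -- build ν'
    obtain ⟨ν₀, hν₀⟩ := Multiset.exists_cons_of_mem hb
    have hν₀sum : ν.sum = b + ν₀.sum := by rw [hν₀]; simp
    have ht' : ∀ i, (h : i < t.length) → k * t[i] ≤ (t.drop i).sum + (k - 1) := by
      intro i h
      have := hcond (i+1) (by simpa using Nat.succ_lt_succ h)
      simpa using this
    have htpos : ∀ x ∈ t, 0 < x := fun x hx => hpos x (List.mem_cons_of_mem a hx)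
    by_cases hcase : a = b
    · -- ν' = ν₀
      have hν'p : IsPartition t.sum ν₀ := by
        constructor
        · intro x hx; exact hνpos x (by rw [hν₀]; exact Multiset.mem_cons_of_mem hx)
        · rw [hνsum, hn] at hν₀sum; omega
      have hν'card : Multiset.card ν₀ ≤ k := by
        have : Multiset.card ν = Multiset.card ν₀ + 1 := by rw [hν₀]; simp
        omega
      obtain ⟨P', hP'sum, hP'map⟩ := ih htpos ht' ν₀ hν'p hν'card
      refine ⟨({a} : Multiset ℕ) ::ₘ P', ?_, ?_⟩
      · simp [hP'sum]
      · rw [Multiset.map_cons, hP'map, hν₀, hcase]; simp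
    · -- a < b, ν' = (b - a) ::ₘ ν₀
      have hab' : a < b := lt_of_le_of_ne hab hcase
      have hν'p : IsPartition t.sum ((b - a) ::ₘ ν₀) := by
        constructor
        · intro x hx
          rcases Multiset.mem_cons.1 hx with h|h
          · subst h; omega
          · exact hνpos x (by rw [hν₀]; exact Multiset.mem_cons_of_mem h)
        · rw [hνsum, hn] at hν₀sum; simp; omega
      have hν'card : Multiset.card ((b - a) ::ₘ ν₀) ≤ k := by
        have : Multiset.card ν = Multiset.card ν₀ + 1 := by rw [hν₀]; simp
        simp; omega
      obtain ⟨P', hP'sum, hP'map⟩ := ih htpos ht' _ hν'p hν'card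
      -- find block with sum b - a
      have : (b - a) ∈ P'.map Multiset.sum := by rw [hP'map]; exact Multiset.mem_cons_self _ _
      obtain ⟨B, hBmem, hBsum⟩ := Multiset.mem_map.1 this
      obtain ⟨Q, hQ⟩ := Multiset.exists_cons_of_mem hBmem
      refine ⟨(a ::ₘ B) ::ₘ Q, ?_, ?_⟩
      · rw [hQ] at hP'sum
        simp only [Multiset.sum_cons] at hP'sum
        simp only [Multiset.sum_cons]
        rw [← Multiset.cons_coe, ← hP'sum]
        rw [Multiset.cons_add]
      · rw [hQ] at hP'map
        rw [Multiset.map_cons, hBsum] at hP'map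
        have hcancel : Multiset.map Multiset.sum Q = ν₀ :=
          (Multiset.cons_inj_right _).mp hP'map
        rw [Multiset.map_cons, hcancel, hν₀, Multiset.sum_cons, hBsum]
        congr 1
        omega

lemma my_mem_sum {S : Multiset (Multiset ℕ)} {x : ℕ} (h : x ∈ S.sum) : ∃ B ∈ S, x ∈ B := by
  induction S using Multiset.induction_on with
  | empty => simp at h
  | cons a s ih =>
    rw [Multiset.sum_cons, Multiset.mem_add] at h
    rcases h with h|h
    · exact ⟨a, Multiset.mem_cons_self a s, h⟩
    · obtain ⟨B, hB, hx⟩ := ih h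
      exact ⟨B, Multiset.mem_cons_of_mem hB, hx⟩

lemma my_sum_sum (S : Multiset (Multiset ℕ)) : S.sum.sum = (S.map Multiset.sum).sum := by
  induction S using Multiset.induction_on with
  | empty => simp
  | cons a s ih => simp [ih]

lemma my_sum_mono {s t : Multiset ℕ} (h : s ≤ t) : s.sum ≤ t.sum := by
  obtain ⟨u, rfl⟩ := Multiset.le_iff_exists_add.1 h
  simp

lemma nec (k : ℕ) (hk : 1 ≤ k) (μ : List ℕ) (hsorted : μ.Pairwise (· ≥ ·))
    (hpos : ∀ x ∈ μ, 0 < x) (hgen : GeneratesAll μ.sum k ↑μ) :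
    ∀ i, (h : i < μ.length) → k * μ[i] ≤ (μ.drop i).sum + (k - 1) := by
  intro i hi
  by_contra hcon
  push_neg at hcon
  set a := μ[i] with ha_def
  set s := (μ.drop i).sum with hs_def
  have hdrop : μ.drop i = a :: μ.drop (i + 1) := List.drop_eq_getElem_cons hi
  have has : a ≤ s := by rw [hs_def, hdrop]; simp
  have ha1 : 0 < a := hpos a (List.getElem_mem hi)
  -- k ≥ 2
  have hk2 : 2 ≤ k := by
    by_contra h
    have hk1 : k = 1 := by omega
    subst hk1
    simp at hcon
    omega
  obtain ⟨K, rfl⟩ : ∃ K, k = K + 1 := ⟨k - 1, by omega⟩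
  have hK1 : 1 ≤ K := by omega
  rw [Nat.add_sub_cancel] at hcon
  set t := (s + K) / (K + 1) with ht_def
  have hdm : (K + 1) * t + (s + K) % (K + 1) = s + K := by
    rw [ht_def]; exact Nat.div_add_mod _ _
  have hmlt : (s + K) % (K + 1) < K + 1 := Nat.mod_lt _ (by omega)
  have hts : s ≤ (K + 1) * t := by omega
  have hts' : (K + 1) * t ≤ s + K := by omega
  have hta : t < a := by
    have h2 : (K + 1) * t < (K + 1) * a := by omega
    exact Nat.lt_of_mul_lt_mul_left h2
  have ht1 : 1 ≤ t := by
    rcases Nat.eq_zero_or_pos t with h|h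
    · rw [h] at hts; omega
    · exact h
  -- small parts of size t, d of them, plus remainder r2
  have hst : t ≤ s := by omega
  set d := (s - t) / t with hd_def
  set r2 := (s - t) % t with hr2_def
  have hsplit : d * t + r2 = s - t := by
    rw [hd_def, hr2_def, mul_comm]; exact Nat.div_add_mod _ _
  have hr2lt : r2 < t := by rw [hr2_def]; exact Nat.mod_lt _ (by omega)
  -- card bound : d + (r2 ≠ 0) ≤ K
  have hsK : s - t ≤ K * t := by
    have : (K + 1) * t = K * t + t := by ring
    omega
  have hdK : (r2 = 0 → d ≤ K) ∧ (r2 ≠ 0 → d + 1 ≤ K) := by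
    constructor
    · intro h0
      have h1 : d * t ≤ K * t := by omega
      exact Nat.le_of_mul_le_mul_right h1 (by omega)
    · intro h0
      have h1 : d * t < K * t := by omega
      have := Nat.lt_of_mul_lt_mul_right h1
      omega
  set A := (μ.take i).sum + t with hA_def
  set w : Multiset ℕ := Multiset.replicate d t + (if r2 = 0 then 0 else {r2}) with hw_def
  set ν : Multiset ℕ := A ::ₘ w with hν_def
  have hwsum : w.sum = s - t := by
    rw [hw_def]
    rcases Nat.eq_zero_or_pos r2 with h|h
    · simp [h, Multiset.sum_replicate]; omega
    · have : ¬ r2 = 0 := by omega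
      simp only [this, if_false, Multiset.sum_add, Multiset.sum_replicate, smul_eq_mul,
        Multiset.sum_singleton]
      omega
  have htd : (μ.take i).sum + s = μ.sum := by
    conv_rhs => rw [← List.take_append_drop i μ]
    rw [List.sum_append]
  have hνpart : IsPartition μ.sum ν := by
    constructor
    · intro x hx
      rw [hν_def] at hx
      rcases Multiset.mem_cons.1 hx with h|h
      · omega
      · rw [hw_def] at h
        rcases Multiset.mem_add.1 h with h|h
        · rw [Multiset.eq_of_mem_replicate h]; omega
        · rcases Nat.eq_zero_or_pos r2 with h0|h0
          · simp [h0] at h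
          · have : ¬ r2 = 0 := by omega
            simp [this] at h; omega
    · rw [hν_def, Multiset.sum_cons, hwsum, hA_def]; omega
  have hνcard : Multiset.card ν ≤ K + 1 := by
    rw [hν_def, hw_def]
    simp only [Multiset.card_cons, Multiset.card_add, Multiset.card_replicate]
    rcases Nat.eq_zero_or_pos r2 with h0|h0
    · have := hdK.1 (by omega); simp [h0]; omega
    · have h0' : ¬ r2 = 0 := by omega
      have := hdK.2 h0'; simp [h0']; omega
  obtain ⟨P, hPsum, hPmap⟩ := hgen ν hνpart hνcard
  -- big/small split
  classical
  set p : Multiset ℕ → Prop := fun B => t < B.sum with hp_def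
  have hsplitP : P.filter p + P.filter (fun B => ¬ p B) = P := Multiset.filter_add_not p P
  -- filter of μ
  have hμfil : (↑μ : Multiset ℕ).filter (fun x => t < x)
      = (((P.filter p).sum : Multiset ℕ)).filter (fun x => t < x)
        + ((P.filter (fun B => ¬ p B)).sum).filter (fun x => t < x) := by
    conv_lhs => rw [← hPsum, ← hsplitP]
    rw [Multiset.sum_add, Multiset.filter_add]
  have hsmall0 : ((P.filter (fun B => ¬ p B)).sum).filter (fun x => t < x) = 0 := by
    rw [Multiset.filter_eq_nil]
    intro x hx
    obtain ⟨B, hB, hxB⟩ := my_mem_sum hx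
    have hBsum : ¬ t < B.sum := (Multiset.mem_filter.1 hB).2
    have : x ≤ B.sum := Multiset.single_le_sum (fun y _ => Nat.zero_le y) x hxB
    omega
  -- upper bound
  have hbig_map : Multiset.map Multiset.sum (P.filter p) = ν.filter (fun x => t < x) := by
    rw [← hPmap, Multiset.filter_map]
    rfl
  have hub : (((↑μ : Multiset ℕ).filter (fun x => t < x))).sum ≤ A := by
    rw [hμfil, hsmall0, add_zero]
    calc ((P.filter p).sum.filter (fun x => t < x)).sum
        ≤ ((P.filter p).sum).sum := my_sum_mono (Multiset.filter_le _ _)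
      _ = (Multiset.map Multiset.sum (P.filter p)).sum := my_sum_sum _
      _ = (ν.filter (fun x => t < x)).sum := by rw [hbig_map]
      _ ≤ A := by
          rw [hν_def, hw_def, Multiset.filter_cons]
          have hwfil : (Multiset.replicate d t + (if r2 = 0 then (0:Multiset ℕ) else {r2})).filter (fun x => t < x) = 0 := by
            rw [Multiset.filter_eq_nil]
            intro x hx
            rcases Multiset.mem_add.1 hx with h|h
            · rw [Multiset.eq_of_mem_replicate h]; omega
            · rcases Nat.eq_zero_or_pos r2 with h0|h0
              · simp [h0] at h
              · have : ¬ r2 = 0 := by omega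
                simp [this] at h; omega
          rw [hwfil, add_zero]
          by_cases hA : t < A
          · simp [hA]
          · simp [hA]
  -- lower bound
  have htake : (↑(μ.take (i+1)) : Multiset ℕ) ≤ ↑μ :=
    (List.take_sublist (i+1) μ).subperm
  have htakemem : ∀ x ∈ μ.take (i+1), t < x := by
    intro x hx
    rw [List.mem_iff_getElem] at hx
    obtain ⟨j, hj, he⟩ := hx
    rw [List.length_take] at hj
    have hjl : j < μ.length := by omega
    have hje : (μ.take (i+1))[j] = μ[j] := List.getElem_take
    have hji : μ[i] ≤ μ[j] := by
      rcases Nat.eq_or_lt_of_le (by omega : j ≤ i) with h|h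
      · subst h; rfl
      · exact hsorted.rel_get_of_lt (a := ⟨j, hjl⟩) (b := ⟨i, hi⟩) h
    omega
  have hlb : (μ.take (i+1)).sum ≤ (((↑μ : Multiset ℕ).filter (fun x => t < x))).sum := by
    have h1 : ((↑(μ.take (i+1)) : Multiset ℕ)).filter (fun x => t < x) = ↑(μ.take (i+1)) :=
      Multiset.filter_eq_self.2 (by intro x hx; exact htakemem x (by exact_mod_cast hx))
    calc (μ.take (i+1)).sum = (((↑(μ.take (i+1)) : Multiset ℕ)).filter (fun x => t < x)).sum := by
          rw [h1]; simp [Multiset.sum_coe]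
      _ ≤ _ := my_sum_mono (Multiset.filter_le_filter _ htake)
  have hsum_take : (μ.take (i+1)).sum = (μ.take i).sum + a := by
    have : μ.take (i+1) = μ.take i ++ [a] := by
      rw [List.take_succ]
      congr
      rw [List.getElem?_eq_getElem hi]
      rfl
    rw [this, List.sum_append]; simp
  omega

/-- if `lam = (λ_1 ≥ ⋯ ≥ λ_l)` generates all `k`-partitions of its
sum, then for every `m ∈ {2, …, l}` the truncation `(λ_m, …, λ_l)`
(0-indexed: `lam.drop (m-1)` with `1 ≤ m - 1 < l`) generates all
`k`-partitions of its own sum. -/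
theorem drop_generatesAll (k : ℕ) (hk : 1 ≤ k)
    (lam : List ℕ) (hsorted : lam.Pairwise (· ≥ ·)) (hpos : ∀ x ∈ lam, 0 < x)
    (hgen : GeneratesAll lam.sum k (↑lam : Multiset ℕ))
    (m : ℕ) (hm1 : 1 ≤ m) (hml : m < lam.length) :
    GeneratesAll (lam.drop m).sum k (↑(lam.drop m) : Multiset ℕ) := by
  have hcond := nec k hk lam hsorted hpos hgen
  apply suff k hk
  · intro x hx
    exact hpos x (List.mem_of_mem_drop hx)
  · intro i h
    have hml' : m + i < lam.length := by
      have := List.length_drop (i := m) (l := lam)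
      omega
    have h1 : (lam.drop m)[i] = lam[m + i] := List.getElem_drop ..
    have h2 : (lam.drop m).drop i = lam.drop (m + i) := by
      rw [List.drop_drop]
    rw [h1, h2]
    exact hcond (m + i) hml'
end

section
/- Let n ≥ 1 and k ≥ 2 be integers, and let L(n,k) denote the number of parts of the greedy partition of n defined by μ_1 = ⌈n/k⌉ and μ_i = ⌈(n − Σ_{j<i} μ_j)/k⌉ for i > 1 (stopping when the remainder reaches 0). Then L(n,k) ≤ ⌈log_{k/(k−1)}(n)⌉ + 1. -/
/-! Each greedy step removes `⌈m / k⌉ ≥ m / k` from the remainder `m`, so the next remainder `r`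
satisfies `q * r ≤ m` with `q = k / (k - 1)`. Hence `log_q r ≤ log_q m - 1`, and strong induction
on `m` gives the bound: each step costs one part and lowers the ceiling of the logarithm by one,
while the last step (remainder `0`) costs the extra `+ 1`. -/

theorem greedyList_succ {k : ℕ} (hk : k ≠ 0) (n : ℕ) :
    greedyList k (n + 1) = (n + k) / k :: greedyList k (n + 1 - (n + k) / k) := by
  rw [greedyList, dif_neg hk]

/-- `(n + k) / k = ⌈(n + 1) / k⌉`: one greedy step leaves at most `(k - 1) / k` of `n + 1`. -/
theorem mul_sub_div_add_le {k : ℕ} (hk : 0 < k) (n : ℕ) :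
    k * (n + 1 - (n + k) / k) + (n + 1) ≤ k * (n + 1) := by
  have hdm := Nat.div_add_mod (n + k) k
  have hmod := Nat.mod_lt (n + k) hk
  have := Nat.le_mul_of_pos_left (n + 1) hk
  rw [Nat.mul_sub]
  omega

theorem ceil_logb_add_one_le_of_mul_le {q r x : ℝ} (hq : 1 < q) (hr : 0 < r) (h : q * r ≤ x) :
    ⌈Real.logb q r⌉ + 1 ≤ ⌈Real.logb q x⌉ := by
  have hlog : Real.logb q r + 1 ≤ Real.logb q x := by
    calc Real.logb q r + 1 = Real.logb q (q * r) := by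
          rw [Real.logb_mul (by positivity) hr.ne', Real.logb_self_eq_one hq, add_comm]
      _ ≤ Real.logb q x := Real.logb_le_logb_of_le hq (by positivity) h
  rw [← Int.ceil_add_one]
  exact Int.ceil_mono hlog

theorem greedy_length_le_log_general (n k : ℕ) (hk : 2 ≤ k) :
    ((greedyList k n).length : ℤ) ≤
      ⌈Real.logb ((k : ℝ) / ((k : ℝ) - 1)) (n : ℝ)⌉ + 1 := by
  have hk1 : (1 : ℝ) < k := by exact_mod_cast hk
  have hq : 1 < (k : ℝ) / ((k : ℝ) - 1) := (one_lt_div (by linarith)).mpr (by linarith)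
  induction n using Nat.strong_induction_on with
  | _ n ih =>
  rcases n with _ | m
  · simp [greedyList]
  have hrem := mul_sub_div_add_le (by omega : 0 < k) m
  rw [greedyList_succ (by omega), List.length_cons, Nat.cast_succ, Nat.cast_succ]
  generalize m + 1 - (m + k) / k = r at hrem ⊢
  rcases Nat.eq_zero_or_pos r with rfl | hr
  · have hlog : 0 ≤ Real.logb ((k : ℝ) / ((k : ℝ) - 1)) ((m : ℝ) + 1) :=
      Real.logb_nonneg hq (by norm_num)
    simpa [greedyList] using Int.ceil_nonneg hlog
  have hstep : (k : ℝ) / ((k : ℝ) - 1) * r ≤ (m : ℝ) + 1 := by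
    rw [div_mul_eq_mul_div, div_le_iff₀ (by linarith)]
    have : ((k * r + (m + 1) : ℕ) : ℝ) ≤ (k * (m + 1) : ℕ) := by exact_mod_cast hrem
    push_cast at this
    linarith
  have hceil := ceil_logb_add_one_le_of_mul_le hq (by exact_mod_cast hr) hstep
  linarith [ih r (by nlinarith)]

/-- the number of parts of the greedy partition is at most
`⌈log_{k/(k-1)} n⌉ + 1`. -/
theorem greedy_length_le_log (n k : ℕ) (hn : 1 ≤ n) (hk : 2 ≤ k) :
    ((greedyList k n).length : ℤ) ≤
      ⌈Real.logb ((k : ℝ) / ((k : ℝ) - 1)) (n : ℝ)⌉ + 1 :=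
  greedy_length_le_log_general n k hk
end

section
/- Let n ≥ 1 and k ≥ 1 be integers. There exists a partition of n that generates all k-partitions of n, has a part equal to ⌈n/k⌉, and no partition of n that generates all k-partitions of n has a part strictly larger than ⌈n/k⌉; that is, ⌈n/k⌉ is the largest value v such that {v} can be completed to a partition of n generating all k-partitions of n. -/
lemma greedy_head_bounds (k n : ℕ) (hk : 1 ≤ k) :
    1 ≤ (n + k) / k ∧ (n + k) / k ≤ n + 1 := by
  constructor
  · exact (Nat.one_le_div_iff (by omega)).mpr (by omega)
  · have : (n + k) / k < n + 2 := by
      rw [Nat.div_lt_iff_lt_mul (by omega)]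
      nlinarith
    omega

lemma greedy_sum (k : ℕ) (hk : 1 ≤ k) : ∀ n, (greedyList k n).sum = n := by
  intro n
  induction n using Nat.strong_induction_on with
  | _ n ih =>
    match n with
    | 0 => simp [greedyList]
    | n + 1 =>
      rw [greedyList, dif_neg (by omega : k ≠ 0)]
      obtain ⟨h1, h2⟩ := greedy_head_bounds k n hk
      rw [List.sum_cons, ih (n + 1 - (n + k) / k) (by omega)]
      omega

lemma greedy_pos (k : ℕ) (hk : 1 ≤ k) : ∀ n, ∀ x ∈ greedyList k n, 0 < x := by
  intro n
  induction n using Nat.strong_induction_on with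
  | _ n ih =>
    match n with
    | 0 => simp [greedyList]
    | n + 1 =>
      rw [greedyList, dif_neg (by omega : k ≠ 0)]
      obtain ⟨h1, h2⟩ := greedy_head_bounds k n hk
      intro x hx
      rcases List.mem_cons.mp hx with h | h
      · omega
      · exact ih (n + 1 - (n + k) / k) (by omega) x h

lemma multiset_exists_max (s : Multiset ℕ) (h : s ≠ 0) :
    ∃ m ∈ s, ∀ x ∈ s, x ≤ m := by
  induction s using Multiset.induction_on with
  | empty => exact absurd rfl h
  | cons a s ih =>
    rcases eq_or_ne s 0 with rfl | hs
    · exact ⟨a, Multiset.mem_cons_self a 0, by simp⟩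
    · obtain ⟨m, hm, hmax⟩ := ih hs
      refine ⟨max a m, ?_, ?_⟩
      · rcases le_total a m with h' | h'
        · rw [max_eq_right h']; exact Multiset.mem_cons_of_mem hm
        · rw [max_eq_left h']; exact Multiset.mem_cons_self a s
      · intro x hx
        rcases Multiset.mem_cons.mp hx with rfl | hx
        · exact le_max_left _ _
        · exact le_trans (hmax x hx) (le_max_right _ _)

lemma mem_multiset_sum {a : ℕ} {P : Multiset (Multiset ℕ)} (h : a ∈ P.sum) :
    ∃ p ∈ P, a ∈ p := by
  induction P using Multiset.induction_on with
  | empty => simp at h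
  | cons q P ih =>
    rw [Multiset.sum_cons, Multiset.mem_add] at h
    rcases h with h | h
    · exact ⟨q, Multiset.mem_cons_self q P, h⟩
    · obtain ⟨p, hp, ha⟩ := ih h
      exact ⟨p, Multiset.mem_cons_of_mem hp, ha⟩

lemma greedy_generates (k : ℕ) (hk : 1 ≤ k) :
    ∀ n, ∀ lam : Multiset ℕ, IsPartition n lam → Multiset.card lam ≤ k →
      Generates (↑(greedyList k n)) lam := by
  intro n
  induction n using Nat.strong_induction_on with
  | _ n ih =>
    match n with
    | 0 =>
      intro lam ⟨hpos, hsum⟩ _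
      have hlam : lam = 0 := by
        rw [Multiset.eq_zero_iff_forall_notMem]
        intro x hx
        have := hpos x hx
        have := Multiset.sum_eq_zero_iff.mp hsum x hx
        omega
      subst hlam
      exact ⟨0, by simp [greedyList], by simp⟩
    | n + 1 =>
      intro lam ⟨hpos, hsum⟩ hcard
      set a := (n + k) / k with ha
      obtain ⟨h1, h2⟩ := greedy_head_bounds k n hk
      -- lam nonempty
      have hlamne : lam ≠ 0 := by
        intro h; rw [h] at hsum; simp at hsum
      obtain ⟨m, hm, hmax⟩ := multiset_exists_max lam hlamne
      have hmsum : m ≤ lam.sum := Multiset.le_sum_of_mem hm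
      have hsumle : lam.sum ≤ Multiset.card lam * m := by
        calc lam.sum ≤ Multiset.card lam • m := Multiset.sum_le_card_nsmul lam m hmax
        _ = Multiset.card lam * m := by simp [smul_eq_mul]
      have hkm : n + 1 ≤ k * m := by
        have : Multiset.card lam * m ≤ k * m := Nat.mul_le_mul_right m hcard
        omega
      have ham : a ≤ m := by
        have : (n + k) / k < m + 1 := by
          rw [Nat.div_lt_iff_lt_mul (by omega)]
          nlinarith
        omega
      have herase : lam = m ::ₘ lam.erase m := (Multiset.cons_erase hm).symm
      have hsumerase : (lam.erase m).sum = n + 1 - m := by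
        have : lam.sum = m + (lam.erase m).sum := by
          conv_lhs => rw [herase]
          rw [Multiset.sum_cons]
        omega
      have hgl : greedyList k (n + 1) = a :: greedyList k (n + 1 - a) := by
        rw [greedyList, dif_neg (by omega : k ≠ 0)]
      rcases eq_or_lt_of_le ham with heq | hlt
      · -- m = a : remove the part entirely
        obtain ⟨P', hP1, hP2⟩ := ih (n + 1 - a) (by omega) (lam.erase m)
          ⟨fun x hx => hpos x (Multiset.mem_of_mem_erase hx), by omega⟩
          (by
            have hcpos : 0 < Multiset.card lam := Multiset.card_pos.mpr hlamne
            rw [Multiset.card_erase_of_mem hm, Nat.pred_eq_sub_one]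
            omega)
        refine ⟨{a} ::ₘ P', ?_, ?_⟩
        · rw [Multiset.sum_cons, hP1, hgl]
          simp [Multiset.cons_coe]
        · rw [Multiset.map_cons, hP2]
          simp only [Multiset.sum_singleton]
          rw [heq]
          exact (herase).symm
      · -- m > a : reduce the part m to m - a
        obtain ⟨P', hP1, hP2⟩ := ih (n + 1 - a) (by omega) ((m - a) ::ₘ lam.erase m)
          ⟨by
            intro x hx
            rcases Multiset.mem_cons.mp hx with rfl | hx
            · omega
            · exact hpos x (Multiset.mem_of_mem_erase hx),
           by rw [Multiset.sum_cons]; omega⟩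
          (by
            have hcpos : 0 < Multiset.card lam := Multiset.card_pos.mpr hlamne
            rw [Multiset.card_cons, Multiset.card_erase_of_mem hm,
              Nat.pred_eq_sub_one]
            omega)
        have hmem : (m - a) ∈ P'.map Multiset.sum := by
          rw [hP2]; exact Multiset.mem_cons_self _ _
        obtain ⟨p, hp, hpsum⟩ := Multiset.mem_map.mp hmem
        have hPQ : P' = p ::ₘ P'.erase p := (Multiset.cons_erase hp).symm
        set Q := P'.erase p with hQ
        have hmapQ : Q.map Multiset.sum = lam.erase m := by
          have h' : p.sum ::ₘ Q.map Multiset.sum = (m - a) ::ₘ lam.erase m := by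
            rw [← Multiset.map_cons, ← hPQ, hP2]
          rw [hpsum] at h'
          exact (Multiset.cons_inj_right _).mp h'
        refine ⟨(a ::ₘ p) ::ₘ Q, ?_, ?_⟩
        · have hs : P'.sum = p + Q.sum := by rw [hPQ, Multiset.sum_cons]
          rw [Multiset.sum_cons, hgl, ← Multiset.cons_coe, ← hP1, hs,
            Multiset.cons_add]
        · rw [Multiset.map_cons, hmapQ, Multiset.sum_cons]
          have : a + p.sum = m := by rw [hpsum]; omega
          rw [this]
          exact herase.symm

/-- `⌈n/k⌉` is the largest value that can occur as a part of a
partition of `n` generating all `k`-partitions of `n`: some such partition has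
a part equal to `⌈n/k⌉`, and no such partition has a part exceeding `⌈n/k⌉`. -/
theorem ceil_is_largest_completable (n k : ℕ) (hn : 1 ≤ n) (hk : 1 ≤ k) :
    (∃ μ : Multiset ℕ, IsPartition n μ ∧ GeneratesAll n k μ ∧
        (n + k - 1) / k ∈ μ) ∧
    (∀ μ : Multiset ℕ, IsPartition n μ → GeneratesAll n k μ →
        ∀ x ∈ μ, x ≤ (n + k - 1) / k) := by
  constructor
  · refine ⟨↑(greedyList k n), ⟨fun x hx => greedy_pos k hk n x (by exact_mod_cast hx),
      by rw [Multiset.sum_coe]; exact greedy_sum k hk n⟩,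
      fun lam h1 h2 => greedy_generates k hk n lam h1 h2, ?_⟩
    obtain ⟨m, rfl⟩ : ∃ m, n = m + 1 := ⟨n - 1, by omega⟩
    rw [greedyList, dif_neg (by omega : k ≠ 0)]
    have : (m + 1 + k - 1) / k = (m + k) / k := by congr 1; omega
    rw [this]
    exact Multiset.mem_coe.mpr List.mem_cons_self
  · intro μ ⟨hpos, hsum⟩ hgen x hx
    set c := (n + k - 1) / k with hc
    have hc1 : 1 ≤ c := (Nat.one_le_div_iff (by omega)).mpr (by omega)
    -- construct a balanced partition with all parts ≤ c
    set q := n / k with hq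
    set r := n % k with hr
    have hn' : n = k * q + r := (Nat.div_add_mod n k).symm
    have hrk : r < k := Nat.mod_lt n (by omega)
    have hcq : r ≠ 0 → q + 1 ≤ c := by
      intro hr0
      have e3 : k * (q + 1) = k * q + k := by ring
      have e4 : n + k - 1 = k * (q + 1) + (r - 1) := by omega
      rw [hc, e4, Nat.mul_add_div (by omega : 0 < k)]
      exact Nat.le_add_right _ _
    have hcq' : q ≤ c := by
      rw [hc, hq]
      exact Nat.div_le_div_right (by omega)
    obtain ⟨lam, hlp, hlc, hlb⟩ :
        ∃ lam : Multiset ℕ, IsPartition n lam ∧ Multiset.card lam ≤ k ∧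
          ∀ y ∈ lam, y ≤ c := by
      rcases Nat.eq_zero_or_pos q with hq0 | hq0
      · have hkq : k * q = 0 := by rw [hq0, Nat.mul_zero]
        refine ⟨Multiset.replicate n 1, ⟨?_, ?_⟩, ?_, ?_⟩
        · intro y hy; rw [Multiset.eq_of_mem_replicate hy]; omega
        · simp [Multiset.sum_replicate]
        · rw [Multiset.card_replicate]; omega
        · intro y hy; rw [Multiset.eq_of_mem_replicate hy]; omega
      · refine ⟨Multiset.replicate r (q + 1) + Multiset.replicate (k - r) q,
          ⟨?_, ?_⟩, ?_, ?_⟩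
        · intro y hy
          rcases Multiset.mem_add.mp hy with hy | hy <;>
            rw [Multiset.eq_of_mem_replicate hy] <;> omega
        · rw [Multiset.sum_add, Multiset.sum_replicate, Multiset.sum_replicate]
          simp only [smul_eq_mul]
          have e1 : (k - r) * q + r * q = k * q := by
            rw [← Nat.add_mul]; congr 1; omega
          have e2 : r * (q + 1) = r * q + r := by ring
          omega
        · rw [Multiset.card_add, Multiset.card_replicate, Multiset.card_replicate]
          omega
        · intro y hy
          rcases Multiset.mem_add.mp hy with hy | hy
          · have hr0 : r ≠ 0 := by
              intro h; rw [h] at hy; simp at hy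
            rw [Multiset.eq_of_mem_replicate hy]
            exact hcq hr0
          · rw [Multiset.eq_of_mem_replicate hy]; exact hcq'
    obtain ⟨P, hP1, hP2⟩ := hgen lam hlp hlc
    rw [← hP1] at hx
    obtain ⟨p, hp, hxp⟩ := mem_multiset_sum hx
    have : x ≤ p.sum := Multiset.le_sum_of_mem hxp
    have : p.sum ∈ lam := hP2 ▸ Multiset.mem_map_of_mem _ hp
    have := hlb p.sum this
    omega
end
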